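/- Let L be the Laplacian of a connected undirected graph on N vertices. For the consensus averaging iteration ζ_{l+1} = v − (L ⊗ I_d)μ_l, μ_{l+1} = μ_l + α(L ⊗ I_d)ζ_{l+1} with 0 < α < 2/σ_max(L)², the sequence ζ_l converges to 1_N ⊗ ((1/N)Σᵢ vᵢ), where v = [v₁; …; v_N]. -/

import Mathlib

/-!
Each of the `d` coordinates evolves independently under the Laplacian `L`. In an orthonormal
eigenbasis of `L` the iteration decouples into scalar recursions `x = u - λ y`,
`y ↦ (1 - α λ²) y + α λ u`, one for each eigenvalue `λ`. For `λ ≠ 0` the step-size bound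
gives `|1 - α λ²| < 1`, so `y → u / λ` and `x → 0`; for `λ = 0` the coordinate `x` equals `u`
from the first step on. Hence `ζ` converges to the orthogonal projection of `v` onto `ker L`, and for a connected
graph `ker L` consists of the constant vectors, so this projection is the average.
-/

open Matrix Kronecker Filter Topology

theorem tendsto_of_succ_eq_mul_add {r c s : ℝ} {y : ℕ → ℝ} (hr : |r| < 1) (hs : r * s + c = s)
    (hy : ∀ l, y (l + 1) = r * y l + c) : Tendsto y atTop (𝓝 s) := by
  have hclosed : ∀ l, y l = r ^ l * (y 0 - s) + s := by
    intro l
    induction l with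
    | zero => ring
    | succ l ih => rw [hy, ih, pow_succ]; linear_combination hs
  have hlim := ((tendsto_pow_atTop_nhds_zero_of_abs_lt_one hr).mul_const (y 0 - s)).add_const s
  rw [zero_mul, zero_add] at hlim
  simpa only [← hclosed] using hlim

theorem tendsto_dualAscent_scalar {lam α u : ℝ} (hα : 0 < α) (hstep : α * lam ^ 2 < 2)
    {x y : ℕ → ℝ} (hx : ∀ l, x (l + 1) = u - lam * y l)
    (hy : ∀ l, y (l + 1) = y l + α * (lam * x (l + 1))) :
    Tendsto x atTop (𝓝 (if lam = 0 then u else 0)) := by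
  rw [← tendsto_add_atTop_iff_nat 1]
  split_ifs with hlam
  · simp only [hx, hlam, zero_mul, sub_zero, tendsto_const_nhds]
  have hr : |1 - α * lam ^ 2| < 1 := by
    rw [abs_lt]; constructor <;> nlinarith [sq_pos_of_ne_zero hlam]
  have hylim : Tendsto y atTop (𝓝 (u / lam)) :=
    tendsto_of_succ_eq_mul_add (c := α * lam * u) hr (by field_simp; ring) fun l => by
      rw [hy, hx]; ring
  have hxlim := (hylim.const_mul lam).const_sub u
  rw [mul_div_cancel₀ u hlam, sub_self] at hxlim
  simpa only [hx] using hxlim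

namespace Matrix.IsHermitian

variable {n : Type*} [Fintype n] [DecidableEq n] {L : Matrix n n ℝ} (hL : L.IsHermitian)

theorem star_eigenvectorUnitary_mulVec_mulVec (z : n → ℝ) :
    star (hL.eigenvectorUnitary : Matrix n n ℝ) *ᵥ (L *ᵥ z) =
      hL.eigenvalues * (star (hL.eigenvectorUnitary : Matrix n n ℝ) *ᵥ z) := by
  have hconj := hL.conjStarAlgAut_star_eigenvectorUnitary
  simp only [Unitary.conjStarAlgAut_apply, Unitary.coe_star, star_star, RCLike.ofReal_real_eq_id,
    Function.id_comp] at hconj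
  have hcomm : star (hL.eigenvectorUnitary : Matrix n n ℝ) * L =
      diagonal hL.eigenvalues * star (hL.eigenvectorUnitary : Matrix n n ℝ) := by
    rw [← hconj, Matrix.mul_assoc _ (hL.eigenvectorUnitary : Matrix n n ℝ),
      Unitary.mul_star_self_of_mem hL.eigenvectorUnitary.2, Matrix.mul_one]
  ext i
  rw [mulVec_mulVec, hcomm, ← mulVec_mulVec, mulVec_diagonal, Pi.mul_apply]

theorem star_eigenvectorUnitary_mulVec_apply (w : n → ℝ) (i : n) :
    (star (hL.eigenvectorUnitary : Matrix n n ℝ) *ᵥ w) i = ⇑(hL.eigenvectorBasis i) ⬝ᵥ w := by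
  simp [mulVec, dotProduct]

/- The hypotheses say that `T` is the orthogonal projection of `u` onto `ker L`. -/
theorem star_eigenvectorUnitary_mulVec_apply_of_projection {u T : n → ℝ} (hT : L *ᵥ T = 0)
    (huT : ∀ z, L *ᵥ z = 0 → z ⬝ᵥ (u - T) = 0) (i : n) :
    (star (hL.eigenvectorUnitary : Matrix n n ℝ) *ᵥ T) i =
      if hL.eigenvalues i = 0 then (star (hL.eigenvectorUnitary : Matrix n n ℝ) *ᵥ u) i else 0 := by
  split_ifs with hev
  · have hker : L *ᵥ ⇑(hL.eigenvectorBasis i) = 0 := by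
      rw [hL.mulVec_eigenvectorBasis, hev, zero_smul]
    have hperp := huT _ hker
    rw [← hL.star_eigenvectorUnitary_mulVec_apply, mulVec_sub, Pi.sub_apply] at hperp
    linarith
  · have h := congrFun (hL.star_eigenvectorUnitary_mulVec_mulVec T) i
    rw [hT, mulVec_zero, Pi.zero_apply, Pi.mul_apply, eq_comm] at h
    exact (mul_eq_zero.mp h).resolve_left hev

theorem tendsto_dualAscent {α : ℝ} (hα : 0 < α) (hstep : ∀ i, α * hL.eigenvalues i ^ 2 < 2)
    {u T : n → ℝ} (hT : L *ᵥ T = 0) (huT : ∀ z, L *ᵥ z = 0 → z ⬝ᵥ (u - T) = 0)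
    {x y : ℕ → n → ℝ} (hx : ∀ l, x (l + 1) = u - L *ᵥ y l)
    (hy : ∀ l, y (l + 1) = y l + α • (L *ᵥ x (l + 1))) :
    Tendsto x atTop (𝓝 T) := by
  set U : Matrix n n ℝ := (hL.eigenvectorUnitary : Matrix n n ℝ)
  have hUU : U * star U = 1 := Unitary.mul_star_self_of_mem hL.eigenvectorUnitary.2
  suffices hcoord : Tendsto (fun l => star U *ᵥ x l) atTop (𝓝 (star U *ᵥ T)) by
    have hback := ((continuous_const (y := U)).matrix_mulVec continuous_id).tendsto _ |>.comp hcoord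
    simpa only [Function.comp_def, id, mulVec_mulVec, hUU, one_mulVec] using hback
  refine tendsto_pi_nhds.mpr fun i => ?_
  rw [hL.star_eigenvectorUnitary_mulVec_apply_of_projection hT huT]
  refine tendsto_dualAscent_scalar hα (hstep i) (y := fun l => (star U *ᵥ y l) i) (fun l => ?_)
    (fun l => ?_)
  · rw [hx, mulVec_sub, Pi.sub_apply, hL.star_eigenvectorUnitary_mulVec_mulVec, Pi.mul_apply]
  · rw [hy, mulVec_add, mulVec_smul, Pi.add_apply, Pi.smul_apply, smul_eq_mul,
      hL.star_eigenvectorUnitary_mulVec_mulVec, Pi.mul_apply]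

theorem eigenvalues_le_of_dotProduct_mulVec_le {σ : ℝ} (h : ∀ x, x ⬝ᵥ (L *ᵥ x) ≤ σ * (x ⬝ᵥ x))
    (i : n) : hL.eigenvalues i ≤ σ := by
  have hunit : ⇑(hL.eigenvectorBasis i) ⬝ᵥ ⇑(hL.eigenvectorBasis i) = 1 := by
    have hinner : inner ℝ (hL.eigenvectorBasis i) (hL.eigenvectorBasis i) = 1 := by
      rw [real_inner_self_eq_norm_sq, hL.eigenvectorBasis.orthonormal.1 i, one_pow]
    rwa [EuclideanSpace.inner_eq_star_dotProduct, star_trivial, dotProduct_comm] at hinner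
  have hb := h (hL.eigenvectorBasis i)
  rw [hunit, mul_one] at hb
  simpa [hL.eigenvalues_eq] using hb

end Matrix.IsHermitian

section WeightedLaplacian

variable {n : Type*} [Fintype n] [DecidableEq n] {a : Matrix n n ℝ}

def weightedLaplacian (a : Matrix n n ℝ) : Matrix n n ℝ :=
  of fun i j => if i = j then ∑ k, a i k else -a i j

theorem weightedLaplacian_mulVec_apply (hdiag : ∀ i, a i i = 0) (x : n → ℝ) (i : n) :
    (weightedLaplacian a *ᵥ x) i = ∑ j, a i j * (x i - x j) := by
  have hterm : ∀ j, weightedLaplacian a i j * x j =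
      (if i = j then ∑ k, a i k * x i else 0) - a i j * x j := by
    intro j
    by_cases hij : i = j
    · subst hij; simp [weightedLaplacian, hdiag, Finset.sum_mul]
    · simp [weightedLaplacian, hij]
  simp only [mulVec, dotProduct, hterm, Finset.sum_sub_distrib, Finset.sum_ite_eq,
    Finset.mem_univ, if_true, mul_sub]

theorem isHermitian_weightedLaplacian (hsym : ∀ i j, a i j = a j i) :
    (weightedLaplacian a).IsHermitian := by
  ext i j
  by_cases hij : i = j
  · subst hij; rfl
  · simp [weightedLaplacian, hij, Ne.symm hij, hsym i j]

theorem dotProduct_weightedLaplacian_mulVec (hsym : ∀ i j, a i j = a j i)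
    (hdiag : ∀ i, a i i = 0) (x : n → ℝ) :
    x ⬝ᵥ (weightedLaplacian a *ᵥ x) = 2⁻¹ * ∑ i, ∑ j, a i j * (x i - x j) ^ 2 := by
  have hswap : ∑ i, ∑ j, a i j * x i * (x i - x j) = ∑ i, ∑ j, a i j * -x j * (x i - x j) := by
    rw [Finset.sum_comm]
    exact Finset.sum_congr rfl fun i _ => Finset.sum_congr rfl fun j _ => by rw [hsym]; ring
  calc x ⬝ᵥ (weightedLaplacian a *ᵥ x) = ∑ i, ∑ j, a i j * x i * (x i - x j) := by
        simp only [dotProduct, weightedLaplacian_mulVec_apply hdiag, Finset.mul_sum]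
        exact Finset.sum_congr rfl fun i _ => Finset.sum_congr rfl fun j _ => by ring
    _ = 2⁻¹ * ∑ i, ∑ j, (a i j * x i * (x i - x j) + a i j * -x j * (x i - x j)) := by
        simp only [Finset.sum_add_distrib, ← hswap]; ring
    _ = 2⁻¹ * ∑ i, ∑ j, a i j * (x i - x j) ^ 2 := by ring_nf

theorem posSemidef_weightedLaplacian (hsym : ∀ i j, a i j = a j i) (hnn : ∀ i j, 0 ≤ a i j)
    (hdiag : ∀ i, a i i = 0) : (weightedLaplacian a).PosSemidef :=
  .of_dotProduct_mulVec_nonneg (isHermitian_weightedLaplacian hsym) fun x => by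
    rw [star_trivial, dotProduct_weightedLaplacian_mulVec hsym hdiag]
    have : 0 ≤ ∑ i, ∑ j, a i j * (x i - x j) ^ 2 :=
      Finset.sum_nonneg fun i _ => Finset.sum_nonneg fun j _ => mul_nonneg (hnn i j) (sq_nonneg _)
    positivity

theorem weightedLaplacian_mulVec_const (hdiag : ∀ i, a i i = 0) (c : ℝ) :
    weightedLaplacian a *ᵥ (fun _ => c) = 0 := by
  ext i
  simp [weightedLaplacian_mulVec_apply hdiag]

theorem apply_eq_of_weightedLaplacian_mulVec_eq_zero (hsym : ∀ i j, a i j = a j i)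
    (hnn : ∀ i j, 0 ≤ a i j) (hdiag : ∀ i, a i i = 0) {x : n → ℝ}
    (hx : weightedLaplacian a *ᵥ x = 0) {i j : n}
    (hij : Relation.ReflTransGen (fun p q => 0 < a p q) i j) : x i = x j := by
  have hterm_nonneg : ∀ p q, 0 ≤ a p q * (x p - x q) ^ 2 := fun p q =>
    mul_nonneg (hnn p q) (sq_nonneg _)
  have hsum : ∑ p, ∑ q, a p q * (x p - x q) ^ 2 = 0 := by
    have hquad := dotProduct_weightedLaplacian_mulVec hsym hdiag x
    rw [hx, dotProduct_zero] at hquad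
    linarith
  have hedge : ∀ p q, 0 < a p q → x p = x q := by
    intro p q hpq
    have hrow := (Fintype.sum_eq_zero_iff_of_nonneg fun p =>
      Finset.sum_nonneg fun q _ => hterm_nonneg p q).mp hsum
    have hterm := congrFun ((Fintype.sum_eq_zero_iff_of_nonneg (hterm_nonneg p)).mp
      (congrFun hrow p)) q
    have hsq := (mul_eq_zero.mp hterm).resolve_left hpq.ne'
    exact sub_eq_zero.mp (pow_eq_zero_iff two_ne_zero |>.mp hsq)
  induction hij with
  | refl => rfl
  | tail _ hpq ih => exact ih.trans (hedge _ _ hpq)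

end WeightedLaplacian

theorem dotProduct_sub_mean_eq_zero {n : Type*} [Fintype n] {z : n → ℝ} (hz : ∀ i j, z i = z j)
    (u : n → ℝ) : z ⬝ᵥ (u - fun _ => (Fintype.card n : ℝ)⁻¹ * ∑ j, u j) = 0 := by
  rcases isEmpty_or_nonempty n with hn | hn
  · simp [dotProduct]
  have hcard : (Fintype.card n : ℝ) ≠ 0 := Nat.cast_ne_zero.mpr Fintype.card_ne_zero
  obtain ⟨i₀⟩ := hn
  simp only [dotProduct, hz _ i₀, ← Finset.mul_sum, Pi.sub_apply, Finset.sum_sub_distrib,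
    Finset.sum_const, Finset.card_univ, nsmul_eq_mul, inv_mul_cancel_left₀ hcard, sub_self,
    mul_zero]

theorem kronecker_one_mulVec_apply {R m n p : Type*} [CommSemiring R] [Fintype n] [Fintype p]
    [DecidableEq p] (A : Matrix m n R) (w : n × p → R) (i : m) (q : p) :
    ((A ⊗ₖ (1 : Matrix p p R)) *ᵥ w) (i, q) = (A *ᵥ fun k => w (k, q)) i := by
  simp [mulVec, dotProduct, Fintype.sum_prod_type, one_apply]

theorem consensus_averaging_dual_ascent_convergence_general {N d : ℕ}
    (a L : Matrix (Fin N) (Fin N) ℝ)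
    (hsym : ∀ i j, a i j = a j i)
    (hnn : ∀ i j, 0 ≤ a i j)
    (hdiag : ∀ i, a i i = 0)
    (hconn : ∀ i j : Fin N, Relation.ReflTransGen (fun p q => 0 < a p q) i j)
    (hL : ∀ i j, L i j = if i = j then ∑ k, a i k else -(a i j))
    (σN : ℝ) (hσN : ∀ x : Fin N → ℝ, x ⬝ᵥ (L *ᵥ x) ≤ σN * (x ⬝ᵥ x)) (hσpos : 0 < σN)
    (Lb : Matrix (Fin N × Fin d) (Fin N × Fin d) ℝ)
    (hLb : Lb = L ⊗ₖ (1 : Matrix (Fin d) (Fin d) ℝ))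
    (α : ℝ) (hα : 0 < α) (hαstep : α < 2 / σN ^ 2)
    (v : Fin N × Fin d → ℝ)
    (ζ μ : ℕ → Fin N × Fin d → ℝ)
    (hiter1 : ∀ l, ζ (l + 1) = v - Lb *ᵥ μ l)
    (hiter2 : ∀ l, μ (l + 1) = μ l + α • (Lb *ᵥ ζ (l + 1))) :
    Filter.Tendsto ζ Filter.atTop
      (nhds (fun p => (N : ℝ)⁻¹ * ∑ j, v (j, p.2))) := by
  obtain rfl : L = weightedLaplacian a := Matrix.ext hL
  subst hLb
  have hH := isHermitian_weightedLaplacian hsym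
  have hstep : ∀ i, α * hH.eigenvalues i ^ 2 < 2 := fun i => by
    have hev_nonneg := (posSemidef_weightedLaplacian hsym hnn hdiag).eigenvalues_nonneg i
    have hev_le := hH.eigenvalues_le_of_dotProduct_mulVec_le hσN i
    rw [lt_div_iff₀ (by positivity)] at hαstep
    nlinarith [mul_le_mul hev_le hev_le hev_nonneg hσpos.le]
  refine tendsto_pi_nhds.mpr fun ⟨i, q⟩ => ?_
  have hcol := hH.tendsto_dualAscent hα hstep (u := fun k => v (k, q))
    (weightedLaplacian_mulVec_const hdiag _)
    (fun z hz => dotProduct_sub_mean_eq_zero (fun i j =>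
      apply_eq_of_weightedLaplacian_mulVec_eq_zero hsym hnn hdiag hz (hconn i j)) _)
    (x := fun l k => ζ l (k, q)) (y := fun l k => μ l (k, q))
    (fun l => by ext k; simp [hiter1, kronecker_one_mulVec_apply])
    (fun l => by ext k; simp [hiter2, kronecker_one_mulVec_apply])
  simpa using tendsto_pi_nhds.mp hcol i

/-- Dual ascent for consensus averaging: the iteration `ζ_{l+1} = v − (L ⊗ I_d)μ_l`,
`μ_{l+1} = μ_l + α(L ⊗ I_d)ζ_{l+1}` with `0 < α < 2/σ_max(L)²` converges to
`1_N ⊗ ((1/N)Σᵢ vᵢ)`. -/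
theorem consensus_averaging_dual_ascent_convergence {N d : ℕ} (hN : 0 < N)
    (a L : Matrix (Fin N) (Fin N) ℝ)
    (hsym : ∀ i j, a i j = a j i)
    (hnn : ∀ i j, 0 ≤ a i j)
    (hdiag : ∀ i, a i i = 0)
    (hconn : ∀ i j : Fin N, Relation.ReflTransGen (fun p q => 0 < a p q) i j)
    (hL : ∀ i j, L i j = if i = j then ∑ k, a i k else -(a i j))
    (σN : ℝ) (hσN : ∀ x : Fin N → ℝ, x ⬝ᵥ (L *ᵥ x) ≤ σN * (x ⬝ᵥ x)) (hσpos : 0 < σN)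
    (Lb : Matrix (Fin N × Fin d) (Fin N × Fin d) ℝ)
    (hLb : Lb = L ⊗ₖ (1 : Matrix (Fin d) (Fin d) ℝ))
    (α : ℝ) (hα : 0 < α) (hαstep : α < 2 / σN ^ 2)
    (v : Fin N × Fin d → ℝ)
    (ζ μ : ℕ → Fin N × Fin d → ℝ)
    (hiter1 : ∀ l, ζ (l + 1) = v - Lb *ᵥ μ l)
    (hiter2 : ∀ l, μ (l + 1) = μ l + α • (Lb *ᵥ ζ (l + 1))) :
    Filter.Tendsto ζ Filter.atTop
      (nhds (fun p => (N : ℝ)⁻¹ * ∑ j, v (j, p.2))) :=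
  consensus_averaging_dual_ascent_convergence_general a L hsym hnn hdiag hconn hL σN hσN hσpos Lb
    hLb α hα hαstep v ζ μ hiter1 hiter2
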